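/- Let X1 and X2 be real-valued random variables on a probability space with continuous cumulative distribution functions F1 and F2, let C(u1,u2) = P(F1(X1) ≤ u1, F2(X2) ≤ u2) be their copula, and define the Spearman rank correlation ρ^S(X1,X2) = 12 E[F1(X1) F2(X2)] − 3. If T1 : ℝ → ℝ is continuous and strictly increasing and T2 : ℝ → ℝ is continuous and strictly decreasing, then ρ^S(T1(X1), T2(X2)) = 3 − 12 ∫₀¹∫₀¹ C(u1, 1 − u2) du1 du2. -/

import Mathlib

/-!
Since `T1` is increasing, `G1 ∘ T1 = F1`; since `T2` is decreasing and `F2` has no jumps,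
`G2 ∘ T2 = 1 - F2`. With `U = F1(X1)` and `V = F2(X2)` the left side is `12 E[U (1 - V)] - 3`.
After the substitution `u2 ↦ 1 - u2`, Fubini turns `∫₀¹∫₀¹ C` into `E[(1 - U)(1 - V)]`, and the two
expectations add up to `E[1 - V] = 1/2`: for a continuous cdf `F`, `E[F(X)] = P(X' ≤ X)` for an
independent copy `X'`, which is `1/2` by symmetry since ties have probability zero.
-/

open MeasureTheory ProbabilityTheory Set

namespace ProbabilityTheory

lemma cdf_mem_Icc (μ : Measure ℝ) (x : ℝ) : cdf μ x ∈ Icc 0 1 :=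
  ⟨cdf_nonneg μ x, cdf_le_one μ x⟩

lemma cdf_map_apply {Ω : Type*} [MeasurableSpace Ω] {P : Measure Ω} [IsProbabilityMeasure P]
    {X : Ω → ℝ} (hX : Measurable X) (t : ℝ) : cdf (P.map X) t = P.real {ω | X ω ≤ t} := by
  have := Measure.isProbabilityMeasure_map (μ := P) hX.aemeasurable
  rw [cdf_eq_real, map_measureReal_apply hX measurableSet_Iic]
  rfl

variable {μ : Measure ℝ} [IsProbabilityMeasure μ]

lemma nullSingletonClass_of_continuous_cdf (h : Continuous (cdf μ)) : NullSingletonClass μ where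
  measure_singleton x := by
    rw [← measure_cdf μ, StieltjesFunction.measure_singleton,
      h.continuousWithinAt.leftLim_eq, sub_self, ENNReal.ofReal_zero]

lemma measureReal_Ici_eq_one_sub_cdf [NullSingletonClass μ] (x : ℝ) :
    μ.real (Ici x) = 1 - cdf μ x := by
  rw [cdf_eq_real, ← measureReal_congr Iio_ae_eq_Iic, ← compl_Iio,
    probReal_compl_eq_one_sub measurableSet_Iio]

lemma integral_cdf_eq_integral_measureReal_Ici :
    ∫ x, cdf μ x ∂μ = ∫ y, μ.real (Ici y) ∂μ := by
  have hs : MeasurableSet {p : ℝ × ℝ | p.2 ≤ p.1} := measurableSet_le measurable_snd measurable_fst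
  calc ∫ x, cdf μ x ∂μ = ∫ x, ∫ y, {p : ℝ × ℝ | p.2 ≤ p.1}.indicator 1 (x, y) ∂μ ∂μ := by
        congr with x
        rw [cdf_eq_real, ← integral_indicator_one measurableSet_Iic]
        rfl
    _ = ∫ y, ∫ x, {p : ℝ × ℝ | p.2 ≤ p.1}.indicator 1 (x, y) ∂μ ∂μ :=
        integral_integral_swap ((integrable_const 1).indicator hs)
    _ = ∫ y, μ.real (Ici y) ∂μ := by
        congr with y
        rw [← integral_indicator_one measurableSet_Ici]
        rfl

lemma integral_cdf_eq_half [NullSingletonClass μ] : ∫ x, cdf μ x ∂μ = 1 / 2 := by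
  have hint : Integrable (cdf μ) μ :=
    .of_mem_Icc 0 1 (cdf μ).mono.measurable.aemeasurable (ae_of_all _ (cdf_mem_Icc μ))
  have h := integral_cdf_eq_integral_measureReal_Ici (μ := μ)
  simp_rw [measureReal_Ici_eq_one_sub_cdf] at h
  rw [integral_sub (integrable_const 1) hint, integral_const, probReal_univ, one_smul] at h
  linarith

lemma integral_cdf_map_comp_eq_half {Ω : Type*} [MeasurableSpace Ω] {P : Measure Ω}
    [IsProbabilityMeasure P] {X : Ω → ℝ} (hX : Measurable X) (h : Continuous (cdf (P.map X))) :
    ∫ ω, cdf (P.map X) (X ω) ∂P = 1 / 2 := by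
  have := Measure.isProbabilityMeasure_map (μ := P) hX.aemeasurable
  have := nullSingletonClass_of_continuous_cdf h
  rw [← integral_map hX.aemeasurable (cdf _).mono.measurable.aestronglyMeasurable]
  exact integral_cdf_eq_half

end ProbabilityTheory

section

variable {Ω : Type*} [MeasurableSpace Ω] {μ : Measure Ω}

lemma integral_mul_add_integral_one_sub_mul {U W : Ω → ℝ} (hU : Measurable U)
    (hU01 : ∀ ω, U ω ∈ Icc (0 : ℝ) 1) (hW : Integrable W μ) :
    ∫ ω, U ω * W ω ∂μ + ∫ ω, (1 - U ω) * W ω ∂μ = ∫ ω, W ω ∂μ := by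
  have hUW : Integrable (fun ω => U ω * W ω) μ :=
    hW.bdd_mul hU.aestronglyMeasurable (c := 1) (ae_of_all _ fun ω => by
      rw [Real.norm_eq_abs, abs_le]
      exact ⟨by linarith [(hU01 ω).1], (hU01 ω).2⟩)
  simp_rw [sub_mul, one_mul]
  rw [integral_sub hW hUW]
  ring

lemma intervalIntegral_setIntegral_le_eq_integral_one_sub_mul [SFinite μ] {g f : Ω → ℝ}
    (hg : Measurable g) (hg01 : ∀ ω, g ω ∈ Icc (0 : ℝ) 1) (hf : Integrable f μ) :
    ∫ v in (0 : ℝ)..1, ∫ ω in {ω | g ω ≤ v}, f ω ∂μ = ∫ ω, (1 - g ω) * f ω ∂μ := by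
  set S : Set (ℝ × Ω) := {p | g p.2 ≤ p.1}
  have hS : MeasurableSet S := measurableSet_le (hg.comp measurable_snd) measurable_fst
  have hslice (ω : Ω) : Ici (g ω) ∩ Icc 0 1 = Icc (g ω) 1 := by
    ext v
    simp only [mem_inter_iff, mem_Ici, mem_Icc]
    exact ⟨fun h => ⟨h.1, h.2.2⟩, fun h => ⟨h.1, (hg01 ω).1.trans h.1, h.2⟩⟩
  rw [intervalIntegral.integral_of_le zero_le_one, ← integral_Icc_eq_integral_Ioc]
  calc ∫ v in Icc (0 : ℝ) 1, ∫ ω in {ω | g ω ≤ v}, f ω ∂μ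
      = ∫ v in Icc (0 : ℝ) 1, ∫ ω, S.indicator (fun p => f p.2) (v, ω) ∂μ := by
        congr with v
        rw [← integral_indicator (measurableSet_le hg measurable_const)]
        rfl
    _ = ∫ ω, (∫ v in Icc (0 : ℝ) 1, S.indicator (fun p => f p.2) (v, ω)) ∂μ :=
        integral_integral_swap ((hf.comp_snd _).indicator hS)
    _ = ∫ ω, (1 - g ω) * f ω ∂μ := by
        congr with ω
        rw [show (fun v => S.indicator (fun p => f p.2) (v, ω))
            = (Ici (g ω)).indicator (fun _ => f ω) from rfl,
          integral_indicator_const _ measurableSet_Ici,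
          measureReal_restrict_apply measurableSet_Ici, hslice ω,
          Real.volume_real_Icc_of_le (hg01 ω).2, smul_eq_mul]

lemma integral_integral_measureReal_le_le [IsFiniteMeasure μ] {U V : Ω → ℝ} (hU : Measurable U)
    (hV : Measurable V) (hU01 : ∀ ω, U ω ∈ Icc (0 : ℝ) 1) (hV01 : ∀ ω, V ω ∈ Icc (0 : ℝ) 1) :
    ∫ u1 in (0 : ℝ)..1, ∫ u2 in (0 : ℝ)..1, μ.real {ω | U ω ≤ u1 ∧ V ω ≤ u2}
      = ∫ ω, (1 - U ω) * (1 - V ω) ∂μ := by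
  have hinner (u1 : ℝ) : ∫ u2 in (0 : ℝ)..1, μ.real {ω | U ω ≤ u1 ∧ V ω ≤ u2}
      = ∫ ω in {ω | U ω ≤ u1}, 1 - V ω ∂μ := by
    have h := intervalIntegral_setIntegral_le_eq_integral_one_sub_mul
      (μ := μ.restrict {ω | U ω ≤ u1}) hV hV01 (integrable_const 1)
    simp only [mul_one, setIntegral_const, smul_eq_mul,
      measureReal_restrict_apply (measurableSet_le hV measurable_const)] at h
    simp_rw [← h, inter_comm]
    rfl
  have hint : Integrable (fun ω => 1 - V ω) μ :=
    .of_mem_Icc 0 1 (measurable_const.sub hV).aemeasurable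
      (ae_of_all _ fun ω => ⟨sub_nonneg.2 (hV01 ω).2, sub_le_self _ (hV01 ω).1⟩)
  simp_rw [hinner]
  exact intervalIntegral_setIntegral_le_eq_integral_one_sub_mul hU hU01 hint

end

theorem spearman_of_strictMono_strictAnti_general
    {Ω : Type*} [MeasureSpace Ω] [IsProbabilityMeasure (ℙ : Measure Ω)]
    (X1 X2 : Ω → ℝ) (hX1 : Measurable X1) (hX2 : Measurable X2)
    (F1 F2 : ℝ → ℝ)
    (hF1 : ∀ t, F1 t = (ℙ {ω | X1 ω ≤ t}).toReal)
    (hF2 : ∀ t, F2 t = (ℙ {ω | X2 ω ≤ t}).toReal)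
    (hF2c : Continuous F2)
    (C : ℝ → ℝ → ℝ)
    (hC : ∀ u1 u2, C u1 u2 = (ℙ {ω | F1 (X1 ω) ≤ u1 ∧ F2 (X2 ω) ≤ u2}).toReal)
    (T1 T2 : ℝ → ℝ)
    (hT1 : StrictMono T1) (hT2 : StrictAnti T2)
    (G1 G2 : ℝ → ℝ)
    (hG1 : ∀ t, G1 t = (ℙ {ω | T1 (X1 ω) ≤ t}).toReal)
    (hG2 : ∀ t, G2 t = (ℙ {ω | T2 (X2 ω) ≤ t}).toReal) :
    12 * (∫ ω, G1 (T1 (X1 ω)) * G2 (T2 (X2 ω))) - 3 =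
      3 - 12 * (∫ u1 in (0:ℝ)..1, ∫ u2 in (0:ℝ)..1, C u1 (1 - u2)) := by
  set μ1 := (ℙ : Measure Ω).map X1
  set μ2 := (ℙ : Measure Ω).map X2
  have : IsProbabilityMeasure μ2 := Measure.isProbabilityMeasure_map hX2.aemeasurable
  obtain rfl : F1 = cdf μ1 := funext fun t => (hF1 t).trans (cdf_map_apply hX1 t).symm
  obtain rfl : F2 = cdf μ2 := funext fun t => (hF2 t).trans (cdf_map_apply hX2 t).symm
  have : NullSingletonClass μ2 := nullSingletonClass_of_continuous_cdf hF2c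
  have hG1T1 (x : ℝ) : G1 (T1 x) = cdf μ1 x := by
    simp_rw [hG1, hF1, hT1.le_iff_le]
  have hG2T2 (x : ℝ) : G2 (T2 x) = 1 - cdf μ2 x := by
    rw [hG2, ← measureReal_Ici_eq_one_sub_cdf, show μ2.real (Ici x) =
      (ℙ : Measure Ω).real {ω | x ≤ X2 ω} from map_measureReal_apply hX2 measurableSet_Ici]
    simp_rw [hT2.le_iff_ge]
    rfl
  have hU : Measurable fun ω => cdf μ1 (X1 ω) := (cdf μ1).mono.measurable.comp hX1
  have hV : Measurable fun ω => cdf μ2 (X2 ω) := (cdf μ2).mono.measurable.comp hX2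
  have hcopula : ∫ u1 in (0:ℝ)..1, ∫ u2 in (0:ℝ)..1, C u1 (1 - u2)
      = ∫ ω, (1 - cdf μ1 (X1 ω)) * (1 - cdf μ2 (X2 ω)) := by
    have hflip (u1 : ℝ) : ∫ u2 in (0:ℝ)..1, C u1 (1 - u2) = ∫ u2 in (0:ℝ)..1, C u1 u2 := by
      simp [intervalIntegral.integral_comp_sub_left (C u1) (1 : ℝ)]
    simp_rw [hflip, hC]
    exact integral_integral_measureReal_le_le hU hV (fun _ => cdf_mem_Icc _ _)
      (fun _ => cdf_mem_Icc _ _)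
  have hV_int : Integrable fun ω => cdf μ2 (X2 ω) :=
    .of_mem_Icc 0 1 hV.aemeasurable (ae_of_all _ fun _ => cdf_mem_Icc _ _)
  have hsum := integral_mul_add_integral_one_sub_mul (W := fun ω => 1 - cdf μ2 (X2 ω)) hU
    (fun _ => cdf_mem_Icc _ _) ((integrable_const 1).sub hV_int)
  rw [integral_sub (integrable_const 1) hV_int, integral_cdf_map_comp_eq_half hX2 hF2c,
    integral_const, probReal_univ, one_smul] at hsum
  simp_rw [hG1T1, hG2T2, hcopula]
  linarith

/-- **Spearman's rho under an increasing and a decreasing transformation.**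
With copula `C(u1,u2) = P(F1(X1) ≤ u1, F2(X2) ≤ u2)` and
`ρ^S(X1,X2) = 12 E[F1(X1) F2(X2)] − 3`, if `T1` is continuous strictly increasing and `T2`
is continuous strictly decreasing, then
`ρ^S(T1(X1), T2(X2)) = 3 − 12 ∫₀¹∫₀¹ C(u1, 1 − u2) du1 du2`. -/
theorem spearman_of_strictMono_strictAnti
    {Ω : Type*} [MeasureSpace Ω] [IsProbabilityMeasure (ℙ : Measure Ω)]
    (X1 X2 : Ω → ℝ) (hX1 : Measurable X1) (hX2 : Measurable X2)
    (F1 F2 : ℝ → ℝ)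
    (hF1 : ∀ t, F1 t = (ℙ {ω | X1 ω ≤ t}).toReal)
    (hF2 : ∀ t, F2 t = (ℙ {ω | X2 ω ≤ t}).toReal)
    (hF1c : Continuous F1) (hF2c : Continuous F2)
    (C : ℝ → ℝ → ℝ)
    (hC : ∀ u1 u2, C u1 u2 = (ℙ {ω | F1 (X1 ω) ≤ u1 ∧ F2 (X2 ω) ≤ u2}).toReal)
    (T1 T2 : ℝ → ℝ)
    (hT1c : Continuous T1) (hT2c : Continuous T2)
    (hT1 : StrictMono T1) (hT2 : StrictAnti T2)
    (G1 G2 : ℝ → ℝ)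
    (hG1 : ∀ t, G1 t = (ℙ {ω | T1 (X1 ω) ≤ t}).toReal)
    (hG2 : ∀ t, G2 t = (ℙ {ω | T2 (X2 ω) ≤ t}).toReal) :
    12 * (∫ ω, G1 (T1 (X1 ω)) * G2 (T2 (X2 ω))) - 3 =
      3 - 12 * (∫ u1 in (0:ℝ)..1, ∫ u2 in (0:ℝ)..1, C u1 (1 - u2)) :=
  spearman_of_strictMono_strictAnti_general X1 X2 hX1 hX2 F1 F2 hF1 hF2 hF2c C hC T1 T2 hT1 hT2 G1
    G2 hG1 hG2
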